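/- arXiv:math/0412495 — 2 statements merged into one kernel-verified Lean document; each statement's English description precedes it below -/
import Mathlib

section
/- Let 1 < α < 2 and a = |cos(π/α)| > 0. For any t > 0, there exists a finite constant C(t) such that for all y ∈ ℝ, ∫_0^t s^{-α/2} exp(-(2a/s)·|y|^{2/α}) ds ≤ C(t)/(1 + |y|²). -/
open Real MeasureTheory

lemma exp_bound_aux (α : ℝ) (hα1 : 1 ≤ α) (hα2 : α ≤ 2) (x : ℝ) (hx : 0 < x) :
    Real.exp (-x) ≤ 4 * x ^ (-α) := by
  have hxp : 0 < x ^ α := Real.rpow_pos_of_pos hx α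
  have h1 : 1 + x / 2 ≤ Real.exp (x / 2) := by
    linarith [Real.add_one_le_exp (x / 2)]
  have h2 : Real.exp x = Real.exp (x / 2) * Real.exp (x / 2) := by
    rw [← Real.exp_add]; ring_nf
  have hxa : x ^ α ≤ x + x ^ 2 := by
    rcases le_total x 1 with h | h
    · have h3 : x ^ α ≤ x ^ (1 : ℝ) := Real.rpow_le_rpow_of_exponent_ge hx h hα1
      rw [Real.rpow_one] at h3
      nlinarith [sq_nonneg x]
    · have h3 : x ^ α ≤ x ^ (2 : ℝ) := Real.rpow_le_rpow_of_exponent_le h hα2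
      rw [show (2:ℝ) = ((2:ℕ):ℝ) by norm_num, Real.rpow_natCast] at h3
      nlinarith
  have key : x ^ α ≤ 4 * Real.exp x := by nlinarith
  rw [Real.exp_neg, Real.rpow_neg hx.le,
    show (4:ℝ) * (x ^ α)⁻¹ = 4 / x ^ α from (div_eq_mul_inv 4 _).symm,
    le_div_iff₀ hxp, inv_mul_eq_div, div_le_iff₀ (Real.exp_pos x)]
  linarith

/-- For `1 < α < 2`, `a = |cos (π/α)|` and `t > 0`, there is a finite constant `C`
with `∫_0^t s^{-α/2} exp (-(2a/s) |y|^{2/α}) ds ≤ C / (1 + |y|²)` for all `y`. -/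
theorem stmt_7 (α t : ℝ) (hα1 : 1 < α) (hα2 : α < 2) (ht : 0 < t) :
    ∃ C : ℝ, ∀ y : ℝ,
      (∫ s in Set.Ioc (0 : ℝ) t,
          s ^ (-(α / 2)) *
            Real.exp (-(2 * |Real.cos (Real.pi / α)| / s) * |y| ^ (2 / α))) ≤
        C / (1 + |y| ^ 2) := by
  set a : ℝ := |Real.cos (Real.pi / α)| with ha_def
  have hα0 : 0 < α := by linarith
  have hπα1 : Real.pi / 2 < Real.pi / α :=
    div_lt_div_of_pos_left Real.pi_pos hα0 hα2
  have hcos : Real.cos (Real.pi / α) < 0 := by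
    apply Real.cos_neg_of_pi_div_two_lt_of_lt hπα1
    have : Real.pi / α < Real.pi := by
      rw [div_lt_iff₀ hα0]; nlinarith [Real.pi_pos]
    linarith [Real.pi_pos]
  have ha : 0 < a := abs_pos.mpr hcos.ne
  -- integrability facts
  have hint1 : IntegrableOn (fun s : ℝ => s ^ (-(α / 2))) (Set.Ioc 0 t) := by
    rw [← intervalIntegrable_iff_integrableOn_Ioc_of_le ht.le]
    exact intervalIntegral.intervalIntegrable_rpow' (by linarith)
  have hint2 : IntegrableOn (fun s : ℝ => s ^ (α / 2)) (Set.Ioc 0 t) := by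
    rw [← intervalIntegrable_iff_integrableOn_Ioc_of_le ht.le]
    exact intervalIntegral.intervalIntegrable_rpow' (by linarith)
  set A : ℝ := ∫ s in Set.Ioc (0:ℝ) t, s ^ (-(α / 2)) with hA
  set B : ℝ := (4 * (2 * a) ^ (-α)) * ∫ s in Set.Ioc (0:ℝ) t, s ^ (α / 2) with hB
  refine ⟨A + B, fun y => ?_⟩
  set f : ℝ → ℝ := fun s =>
    s ^ (-(α / 2)) * Real.exp (-(2 * a / s) * |y| ^ (2 / α)) with hf_def
  have hfm : Measurable f := by fun_prop
  have hf_int : IntegrableOn f (Set.Ioc 0 t) := by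
    apply hint1.mono' hfm.aestronglyMeasurable
    filter_upwards [ae_restrict_mem measurableSet_Ioc] with s hs
    have hs0 : (0:ℝ) < s := hs.1
    have h1 : (0:ℝ) ≤ s ^ (-(α / 2)) := Real.rpow_nonneg hs0.le _
    have h2 : Real.exp (-(2 * a / s) * |y| ^ (2 / α)) ≤ 1 := by
      apply Real.exp_le_one_iff.mpr
      have : 0 ≤ 2 * a / s * |y| ^ (2 / α) := by positivity
      nlinarith
    simp only [hf_def, Real.norm_eq_abs]
    rw [abs_of_nonneg (by positivity)]
    nlinarith [Real.exp_pos (-(2 * a / s) * |y| ^ (2 / α))]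
  set I : ℝ := ∫ s in Set.Ioc (0:ℝ) t, f s with hI
  -- first bound: I ≤ A
  have hIA : I ≤ A := by
    apply setIntegral_mono_on hf_int hint1 measurableSet_Ioc
    intro s hs
    have hs0 : (0:ℝ) < s := hs.1
    have h2 : Real.exp (-(2 * a / s) * |y| ^ (2 / α)) ≤ 1 := by
      apply Real.exp_le_one_iff.mpr
      have : 0 ≤ 2 * a / s * |y| ^ (2 / α) := by positivity
      nlinarith
    have h1 : (0:ℝ) ≤ s ^ (-(α / 2)) := Real.rpow_nonneg hs0.le _
    calc f s ≤ s ^ (-(α / 2)) * 1 := mul_le_mul_of_nonneg_left h2 h1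
    _ = s ^ (-(α / 2)) := mul_one _
  -- second bound: I * |y|^2 ≤ B
  have hIB : I * |y| ^ 2 ≤ B := by
    have hmul : I * |y| ^ 2 = ∫ s in Set.Ioc (0:ℝ) t, f s * |y| ^ 2 :=
      (integral_mul_const _ _).symm
    rw [hmul, hB, ← integral_const_mul]
    apply setIntegral_mono_on (hf_int.mul_const _) (hint2.const_mul _) measurableSet_Ioc
    intro s hs
    have hs0 : (0:ℝ) < s := hs.1
    rcases eq_or_ne y 0 with rfl | hy
    · simp only [abs_zero]
      rw [zero_pow (by norm_num), mul_zero]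
      positivity
    · have hy0 : 0 < |y| := abs_pos.mpr hy
      set x : ℝ := 2 * a / s * |y| ^ (2 / α) with hx_def
      have hx : 0 < x := by positivity
      have hexp : Real.exp (-x) ≤ 4 * x ^ (-α) := exp_bound_aux α hα1.le hα2.le x hx
      have hxpow : x ^ (-α) = (2 * a) ^ (-α) * s ^ α * (|y| ^ 2)⁻¹ := by
        rw [hx_def, div_eq_mul_inv, Real.mul_rpow (by positivity) (by positivity),
          Real.mul_rpow (by positivity) (by positivity),
          Real.inv_rpow hs0.le, ← Real.rpow_neg hs0.le, neg_neg,
          ← Real.rpow_mul (abs_nonneg y)]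
        congr 1
        rw [← Real.rpow_natCast |y| 2, ← Real.rpow_neg (abs_nonneg y)]
        congr 1
        push_cast
        field_simp
      have hs1 : (0:ℝ) ≤ s ^ (-(α / 2)) := Real.rpow_nonneg hs0.le _
      have heq : s ^ (-(α / 2)) * (4 * ((2 * a) ^ (-α) * s ^ α * (|y| ^ 2)⁻¹)) * |y| ^ 2
          = 4 * (2 * a) ^ (-α) * s ^ (α / 2) := by
        have hy2 : (|y| ^ 2 : ℝ) ≠ 0 := by positivity
        have hss : s ^ (-(α / 2)) * s ^ α = s ^ (α / 2) := by
          rw [← Real.rpow_add hs0]; ring_nf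
        rw [show s ^ (-(α / 2)) * (4 * ((2 * a) ^ (-α) * s ^ α * (|y| ^ 2)⁻¹)) * |y| ^ 2
            = 4 * (2 * a) ^ (-α) * (s ^ (-(α / 2)) * s ^ α) * ((|y| ^ 2)⁻¹ * |y| ^ 2) by ring,
          hss, inv_mul_cancel₀ hy2, mul_one]
      calc f s * |y| ^ 2
          = s ^ (-(α / 2)) * Real.exp (-x) * |y| ^ 2 := by
            rw [hf_def, hx_def]; ring_nf
        _ ≤ s ^ (-(α / 2)) * (4 * x ^ (-α)) * |y| ^ 2 := by
            apply mul_le_mul_of_nonneg_right _ (by positivity)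
            exact mul_le_mul_of_nonneg_left hexp hs1
        _ = 4 * (2 * a) ^ (-α) * s ^ (α / 2) := by rw [hxpow]; exact heq
  have hden : (0:ℝ) < 1 + |y| ^ 2 := by positivity
  show I ≤ (A + B) / (1 + |y| ^ 2)
  rw [le_div_iff₀ hden]
  calc I * (1 + |y| ^ 2) = I + I * |y| ^ 2 := by ring
    _ ≤ A + B := add_le_add hIA hIB
end

section
/- Let μ be a positive measure on ℝ with ∫_ℝ (1+|y|²)^{-1} dμ(y) < ∞, let 1 < α < 2, a = |cos(π/α)|, and t > 0. Then ∫_0^t ∫_ℝ s^{-α/2} exp(-(2a/s)|y|^{2/α}) dμ(y) ds < ∞. -/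
open Real MeasureTheory

lemma key_ineq (α : ℝ) (hα1 : 1 < α) (hα2 : α < 2) {c u : ℝ} (hc : 0 < c) (hu : 0 ≤ u) :
    (1 + u ^ α) * Real.exp (-(c * u)) ≤ 2 + 4 / c ^ 2 := by
  have hα0 : (0:ℝ) ≤ α := by linarith
  have h1 : u ^ α ≤ 1 + u ^ 2 := by
    rcases le_total u 1 with h | h
    · have := Real.rpow_le_one hu h hα0
      nlinarith [sq_nonneg u]
    · have h2 : u ^ α ≤ u ^ (2:ℝ) := Real.rpow_le_rpow_of_exponent_le h hα2.le
      rw [Real.rpow_two] at h2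
      linarith
  have he : c * u / 2 + 1 ≤ Real.exp (c * u / 2) := Real.add_one_le_exp _
  have he2 : Real.exp (c * u / 2) ^ 2 = Real.exp (c * u) := by
    rw [sq, ← Real.exp_add]; ring_nf
  have hcu4 : (c * u) ^ 2 ≤ 4 * Real.exp (c * u) := by
    nlinarith [Real.exp_pos (c * u / 2), mul_nonneg hc.le hu]
  have hE : 0 < Real.exp (c * u) := Real.exp_pos _
  have h2 : u ^ 2 * Real.exp (-(c * u)) ≤ 4 / c ^ 2 := by
    have hc2 : (0:ℝ) < c ^ 2 := pow_pos hc 2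
    rw [Real.exp_neg, div_eq_mul_inv, mul_inv_le_iff₀' hE, ← sub_nonneg]
    have heq : Real.exp (c * u) * (4 * (c ^ 2)⁻¹) - u ^ 2
        = (4 * Real.exp (c * u) - (c * u) ^ 2) / c ^ 2 := by field_simp
    rw [heq]
    exact div_nonneg (by linarith) hc2.le
  have hexp1 : Real.exp (-(c * u)) ≤ 1 :=
    Real.exp_le_one_iff.mpr (by nlinarith [mul_nonneg hc.le hu])
  have hexp0 : 0 ≤ Real.exp (-(c * u)) := (Real.exp_pos _).le
  nlinarith [mul_le_mul_of_nonneg_right h1 hexp0]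

lemma pointwise_bound (α : ℝ) (hα1 : 1 < α) (hα2 : α < 2) {a s : ℝ} (ha : 0 < a)
    (hs : 0 < s) (y : ℝ) :
    s ^ (-(α / 2)) * Real.exp (-(2 * a / s) * |y| ^ (2 / α)) ≤
      (2 * s ^ (-(α / 2)) + s ^ (2 - α / 2) / a ^ 2) * (1 / (1 + |y| ^ 2)) := by
  have hα0 : (0:ℝ) < α := by linarith
  set u := |y| ^ (2 / α) with hu_def
  have hu : 0 ≤ u := Real.rpow_nonneg (abs_nonneg y) _
  have hc : 0 < 2 * a / s := by positivity
  have huα : u ^ α = |y| ^ 2 := by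
    rw [hu_def, ← Real.rpow_natCast |y| 2, ← Real.rpow_mul (abs_nonneg y)]
    congr 1
    push_cast
    field_simp
  have key := key_ineq α hα1 hα2 hc hu
  rw [huα] at key
  have h4 : 4 / (2 * a / s) ^ 2 = s ^ 2 / a ^ 2 := by
    field_simp
    ring
  rw [h4] at key
  have hy1 : (0:ℝ) < 1 + |y| ^ 2 := by positivity
  rw [mul_one_div, le_div_iff₀ hy1, neg_mul]
  have hsa : 0 ≤ s ^ (-(α / 2)) := Real.rpow_nonneg hs.le _
  have hpow : s ^ (-(α / 2)) * s ^ 2 = s ^ (2 - α / 2) := by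
    rw [← Real.rpow_two, ← Real.rpow_add hs]
    ring_nf
  calc s ^ (-(α / 2)) * Real.exp (-(2 * a / s * u)) * (1 + |y| ^ 2)
      = s ^ (-(α / 2)) * ((1 + |y| ^ 2) * Real.exp (-(2 * a / s * u))) := by ring
    _ ≤ s ^ (-(α / 2)) * (2 + s ^ 2 / a ^ 2) := mul_le_mul_of_nonneg_left key hsa
    _ = 2 * s ^ (-(α / 2)) + s ^ (-(α / 2)) * s ^ 2 / a ^ 2 := by ring
    _ = 2 * s ^ (-(α / 2)) + s ^ (2 - α / 2) / a ^ 2 := by rw [hpow]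

/-- If `μ` is a positive measure on `ℝ` with `∫ (1 + |y|²)⁻¹ dμ < ∞`, `1 < α < 2`,
`a = |cos (π/α)|` and `t > 0`, then
`∫_0^t ∫ s^{-α/2} exp (-(2a/s)|y|^{2/α}) dμ(y) ds < ∞`. -/
theorem stmt_8 (μ : Measure ℝ)
    (hμ : ∫⁻ y, ENNReal.ofReal (1 / (1 + |y| ^ 2)) ∂μ < ⊤)
    (α t : ℝ) (hα1 : 1 < α) (hα2 : α < 2) (ht : 0 < t) :
    (∫⁻ s in Set.Ioc (0 : ℝ) t, ∫⁻ y,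
        ENNReal.ofReal (s ^ (-(α / 2)) *
          Real.exp (-(2 * |Real.cos (Real.pi / α)| / s) * |y| ^ (2 / α))) ∂μ) < ⊤ := by
  have hα0 : (0:ℝ) < α := by linarith
  set a := |Real.cos (Real.pi / α)| with ha_def
  have hπ2 : Real.pi / 2 < Real.pi / α :=
    (div_lt_div_iff₀ (by norm_num) hα0).mpr (by nlinarith [Real.pi_pos])
  have hπα : Real.pi / α < Real.pi + Real.pi / 2 := by
    have h : Real.pi / α < Real.pi := by
      rw [div_lt_iff₀ hα0]; nlinarith [Real.pi_pos]
    linarith [Real.pi_pos]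
  have hcos : Real.cos (Real.pi / α) < 0 := Real.cos_neg_of_pi_div_two_lt_of_lt hπ2 hπα
  have ha : 0 < a := abs_pos.mpr hcos.ne
  set M := ∫⁻ y, ENNReal.ofReal (1 / (1 + |y| ^ 2)) ∂μ with hM
  set g : ℝ → ℝ := fun s => 2 * s ^ (-(α / 2)) + s ^ (2 - α / 2) / a ^ 2 with hg
  have h1 : IntegrableOn (fun s : ℝ => s ^ (-(α / 2))) (Set.Ioc 0 t) :=
    (intervalIntegrable_iff_integrableOn_Ioc_of_le ht.le).mp
      (intervalIntegral.intervalIntegrable_rpow' (by linarith))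
  have h2 : IntegrableOn (fun s : ℝ => s ^ (2 - α / 2)) (Set.Ioc 0 t) :=
    (intervalIntegrable_iff_integrableOn_Ioc_of_le ht.le).mp
      (intervalIntegral.intervalIntegrable_rpow' (by linarith))
  have hint : IntegrableOn g (Set.Ioc 0 t) := (h1.const_mul 2).add (h2.div_const _)
  have hglt : ∫⁻ s in Set.Ioc (0:ℝ) t, ENNReal.ofReal (g s) < ⊤ := hint.lintegral_lt_top
  calc (∫⁻ s in Set.Ioc (0 : ℝ) t, ∫⁻ y,
        ENNReal.ofReal (s ^ (-(α / 2)) *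
          Real.exp (-(2 * a / s) * |y| ^ (2 / α))) ∂μ)
      ≤ ∫⁻ s in Set.Ioc (0:ℝ) t, ENNReal.ofReal (g s) * M := by
        apply setLIntegral_mono' measurableSet_Ioc
        intro s hs
        have hs0 : 0 < s := hs.1
        have hgs : 0 ≤ g s :=
          add_nonneg (mul_nonneg (by norm_num) (Real.rpow_nonneg hs0.le _))
            (div_nonneg (Real.rpow_nonneg hs0.le _) (sq_nonneg a))
        calc (∫⁻ y, ENNReal.ofReal (s ^ (-(α / 2)) *
              Real.exp (-(2 * a / s) * |y| ^ (2 / α))) ∂μ)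
            ≤ ∫⁻ y, ENNReal.ofReal (g s) * ENNReal.ofReal (1 / (1 + |y| ^ 2)) ∂μ := by
              apply lintegral_mono
              intro y
              dsimp only
              rw [← ENNReal.ofReal_mul hgs]
              exact ENNReal.ofReal_le_ofReal
                (pointwise_bound α hα1 hα2 ha hs0 y)
          _ = ENNReal.ofReal (g s) * M :=
              lintegral_const_mul' _ _ ENNReal.ofReal_ne_top
    _ = (∫⁻ s in Set.Ioc (0:ℝ) t, ENNReal.ofReal (g s)) * M :=
        lintegral_mul_const' M _ hμ.ne
    _ < ⊤ := ENNReal.mul_lt_top hglt hμ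
end
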